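/- Fix an integer p ≥ 2, β > 0, J > 0 and h ∈ ℝ. For N ≥ 1 let Z_N := Σ_{σ ∈ {-1,1}^N} exp((βJ·(p−1)!/N^{p−1})·Σ_{1≤i₁<⋯<i_p≤N} σ_{i₁}⋯σ_{i_p} + βh·Σ_{i=1}^N σ_i) be the partition function of the fully connected p-spin Ising model. Then lim_{N→∞} (1/N)·log Z_N = max_{m ∈ [−1,1]} [ βJ·m^p/p + βh·m − g(m) ]. -/

import Mathlib

/-!
Group the configurations by their number `k` of up spins, i.e. by the magnetization
`m = 2k/N - 1`. For spins `sᵢ = ±1` the identity `S e_{q+1} = (q+2) e_{q+2} + (N-q) e_q`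
(with `S = ∑ sᵢ`) shows that `p! e_p(s)` differs from `S^p` by at most `p! N^(p-1)`, so every
configuration of magnetization `m` has weight `exp (N (βJ mᵖ/p + βh m) + O(1))`. The number
`N.choose k` of such configurations lies between `exp (-N g(m)) / (N+1)` and `exp (-N g(m))`,
because the `k`-th term of the binomial expansion of `(k + (N - k))^N` is its largest. Hence
`(1/N) log Z_N` is within `O(log N / N)` of the maximum of the functional over the grid
`{2k/N - 1}`, and that maximum converges to the maximum over `[-1, 1]` by continuity.
-/

open Real Filter Finset

noncomputable def spin (b : Bool) : ℝ := if b then 1 else -1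

/-- `Real.log 0 = 0` gives the convention `0 · log 0 = 0` at `m = ±1`. -/
noncomputable def gEntropy (m : ℝ) : ℝ :=
  ((1 - m) / 2) * Real.log ((1 - m) / 2) + ((1 + m) / 2) * Real.log ((1 + m) / 2)

open Topology
open scoped Nat

namespace PSpin

section Esymm

variable {ι : Type*} [Fintype ι]

lemma sum_powersetCard_succ_sum_mem [DecidableEq ι] {M : Type*} [AddCommMonoid M]
    (f : Finset ι → ι → M) (q : ℕ) :
    ∑ A ∈ univ.powersetCard (q + 1), ∑ i ∈ A, f A i =
      ∑ B ∈ univ.powersetCard q, ∑ i ∈ Bᶜ, f (insert i B) i := by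
  rw [sum_sigma', sum_sigma']
  refine sum_nbij' (fun x ↦ ⟨x.1.erase x.2, x.2⟩) (fun y ↦ ⟨insert y.2 y.1, y.2⟩)
    ?_ ?_ ?_ ?_ ?_
  · rintro ⟨A, i⟩ hx
    simp only [mem_sigma, mem_powersetCard_univ, mem_compl] at hx ⊢
    simp [card_erase_of_mem hx.2, hx.1]
  · rintro ⟨B, i⟩ hy
    simp only [mem_sigma, mem_powersetCard_univ, mem_compl] at hy ⊢
    simp [card_insert_of_notMem hy.2, hy.1]
  · rintro ⟨A, i⟩ hx
    simp only [mem_sigma] at hx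
    simp [insert_erase hx.2]
  · rintro ⟨B, i⟩ hy
    simp only [mem_sigma, mem_compl] at hy
    simp [erase_insert hy.2]
  · rintro ⟨A, i⟩ hx
    simp only [mem_sigma] at hx
    simp [insert_erase hx.2]

variable {R : Type*} [CommSemiring R]

def esymm (s : ι → R) (k : ℕ) : R := ∑ A ∈ univ.powersetCard k, ∏ i ∈ A, s i

lemma sum_mul_esymm_succ [DecidableEq ι] (s : ι → R) (hs : ∀ i, s i * s i = 1) (q : ℕ) :
    (∑ i, s i) * esymm s (q + 1) =
      (q + 2) * esymm s (q + 2) + (Fintype.card ι - q : ℕ) * esymm s q := by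
  have split : ∀ A : Finset ι, (∑ i, s i) * ∏ j ∈ A, s j =
      ∑ i ∈ A, ∏ j ∈ A.erase i, s j + ∑ i ∈ Aᶜ, ∏ j ∈ insert i A, s j := by
    intro A
    rw [← sum_add_sum_compl A, add_mul, sum_mul, sum_mul]
    congr 1
    · refine sum_congr rfl fun i hi ↦ ?_
      rw [← mul_prod_erase A s hi, ← mul_assoc, hs, one_mul]
    · exact sum_congr rfl fun i hi ↦ (prod_insert (mem_compl.1 hi)).symm
  have removed : ∑ A ∈ univ.powersetCard (q + 1), ∑ i ∈ A, ∏ j ∈ A.erase i, s j =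
      (Fintype.card ι - q : ℕ) * esymm s q := by
    rw [sum_powersetCard_succ_sum_mem, esymm, mul_sum]
    refine sum_congr rfl fun B hB ↦ ?_
    rw [mem_powersetCard_univ] at hB
    have : ∀ i ∈ Bᶜ, ∏ j ∈ (insert i B).erase i, s j = ∏ j ∈ B, s j := fun i hi ↦ by
      rw [erase_insert (mem_compl.1 hi)]
    rw [sum_congr rfl this, sum_const, card_compl, hB, nsmul_eq_mul]
  have added : ∑ A ∈ univ.powersetCard (q + 1), ∑ i ∈ Aᶜ, ∏ j ∈ insert i A, s j =
      (q + 2) * esymm s (q + 2) := by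
    rw [← sum_powersetCard_succ_sum_mem (fun C _ ↦ ∏ j ∈ C, s j), esymm, mul_sum]
    refine sum_congr rfl fun C hC ↦ ?_
    rw [mem_powersetCard_univ] at hC
    rw [sum_const, hC, nsmul_eq_mul]
    push_cast
    ring
  rw [esymm, mul_sum, sum_congr rfl fun A _ ↦ split A, sum_add_distrib, removed, added]
  ring

lemma abs_esymm_le (s : ι → ℝ) (hs : ∀ i, |s i| = 1) (k : ℕ) :
    |esymm s k| ≤ (Fintype.card ι : ℝ) ^ k := by
  calc |esymm s k| ≤ ∑ A ∈ univ.powersetCard k, |∏ i ∈ A, s i| := abs_sum_le_sum_abs _ _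
    _ = (Fintype.card ι).choose k := by simp [abs_prod, hs]
    _ ≤ (Fintype.card ι : ℝ) ^ k := mod_cast Nat.choose_le_pow _ _

lemma abs_factorial_mul_esymm_sub_pow_le (s : ι → ℝ) (hs : ∀ i, |s i| = 1) (k : ℕ) :
    |k ! * esymm s k - (∑ i, s i) ^ k| ≤ k ! * (Fintype.card ι : ℝ) ^ (k - 1) := by
  classical
  set N : ℝ := (Fintype.card ι : ℝ)
  have hS : |∑ i, s i| ≤ N := (abs_sum_le_sum_abs _ _).trans (by simp [hs, N])
  induction k using Nat.twoStepInduction with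
  | zero => simp [esymm]
  | one => simp [esymm, powersetCard_one]
  | more q _ ih =>
    have hrec := sum_mul_esymm_succ s (fun i ↦ by rw [← abs_mul_abs_self, hs, one_mul]) q
    have hsub : ((Fintype.card ι - q : ℕ) : ℝ) ≤ N := Nat.cast_le.2 (Nat.sub_le _ _)
    have hfact : ((q + 2) ! : ℝ) = (q + 2) * (q + 1) ! := by push_cast [Nat.factorial_succ]; ring
    have key : ((q + 2) ! : ℝ) * esymm s (q + 2) - (∑ i, s i) ^ (q + 2) =
        (∑ i, s i) * ((q + 1) ! * esymm s (q + 1) - (∑ i, s i) ^ (q + 1)) -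
          (q + 1) ! * (((Fintype.card ι - q : ℕ) : ℝ) * esymm s q) := by
      rw [hfact]; linear_combination -(↑(q + 1)! : ℝ) * hrec
    -- each of the two error terms is at most `(q + 1)! N^(q + 1)`, and `2 ≤ q + 2`
    calc _ ≤ N * ((q + 1) ! * N ^ q) + (q + 1) ! * (N * N ^ q) := by
          rw [key]
          refine (abs_sub _ _).trans (add_le_add ?_ ?_)
          · rw [abs_mul]
            exact mul_le_mul hS ih (abs_nonneg _) (by positivity)
          · rw [abs_mul, abs_mul, Nat.abs_cast, Nat.abs_cast]
            gcongr
            exact abs_esymm_le s hs q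
      _ ≤ (q + 2) ! * N ^ (q + 2 - 1) := by
          rw [hfact, show q + 2 - 1 = q + 1 by omega, pow_succ']
          have : (0 : ℝ) ≤ (q + 1) ! * (N * N ^ q) := by positivity
          nlinarith

end Esymm

section Spin

variable {ι : Type*} [Fintype ι]

lemma abs_spin (b : Bool) : |spin b| = 1 := by
  cases b <;> simp [spin]

lemma sum_spin (σ : ι → Bool) :
    ∑ i, spin (σ i) = 2 * #{i | σ i} - Fintype.card ι := by
  have hspin : ∀ b, spin b = 2 * (if b then 1 else 0) - 1 := by
    intro b; cases b <;> norm_num [spin]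
  simp only [hspin]
  rw [sum_sub_distrib, ← mul_sum, sum_boole]
  simp

lemma sum_comp_card_filter [DecidableEq ι] {M : Type*} [AddCommMonoid M] (G : ℕ → M) :
    ∑ σ : ι → Bool, G #{i | σ i} =
      ∑ k ∈ range (Fintype.card ι + 1), (Fintype.card ι).choose k • G k := by
  have hbij : Function.Bijective fun σ : ι → Bool ↦ ({i | σ i} : Finset ι) :=
    Function.bijective_iff_has_inverse.2
      ⟨fun A i ↦ decide (i ∈ A), fun σ ↦ by ext; simp, fun A ↦ by ext; simp⟩
  rw [Fintype.sum_bijective _ hbij _ (fun A ↦ G #A) fun _ ↦ rfl, ← powerset_univ,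
    sum_powerset_apply_card, card_univ]

end Spin

noncomputable def gridPoint (N k : ℕ) : ℝ := (2 * k - N) / N

lemma gridPoint_mem_Icc {N k : ℕ} (hk : k ≤ N) : gridPoint N k ∈ Set.Icc (-1 : ℝ) 1 := by
  rcases N.eq_zero_or_pos with rfl | hN
  · simp [gridPoint]
  have hN' : (0 : ℝ) < N := by exact_mod_cast hN
  have hk' : (k : ℝ) ≤ N := by exact_mod_cast hk
  constructor
  · rw [gridPoint, le_div_iff₀ hN']; linarith [k.cast_nonneg (α := ℝ)]
  · rw [gridPoint, div_le_one hN']; linarith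

def binomialTerm (N k j : ℕ) : ℕ := N.choose j * k ^ j * (N - k) ^ (N - j)

lemma sum_binomialTerm {N k : ℕ} (hk : k ≤ N) :
    ∑ j ∈ range (N + 1), binomialTerm N k j = N ^ N := by
  have := add_pow k (N - k) N
  rw [Nat.add_sub_cancel' hk] at this
  exact this ▸ sum_congr rfl fun j _ ↦ by rw [binomialTerm, Nat.cast_id]; ring

lemma succ_mul_mul_binomialTerm_succ {N j : ℕ} (k : ℕ) (hj : j < N) :
    (j + 1) * (N - k) * binomialTerm N k (j + 1) = (N - j) * k * binomialTerm N k j := by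
  have hpow : (N - k) * (N - k) ^ (N - (j + 1)) = (N - k) ^ (N - j) := by
    rw [← pow_succ']; congr 1; omega
  calc _ = N.choose (j + 1) * (j + 1) * k ^ (j + 1) * ((N - k) * (N - k) ^ (N - (j + 1))) := by
        rw [binomialTerm]; ring
    _ = _ := by rw [Nat.choose_succ_right_eq, hpow, binomialTerm]; ring

/-- The terms of `(k + (N - k)) ^ N` increase up to index `k` and decrease after it. -/
lemma binomialTerm_le_self {N k j : ℕ} (hk : k ≤ N) (hj : j ≤ N) :
    binomialTerm N k j ≤ binomialTerm N k k := by
  have up : MonotoneOn (binomialTerm N k) (Set.Iic k) := by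
    refine monotoneOn_of_le_succ Set.ordConnected_Iic fun a _ _ ha ↦ ?_
    simp only [Order.succ_eq_add_one, Set.mem_Iic] at ha ⊢
    refine le_of_mul_le_mul_left ?_ (Nat.mul_pos (by omega) (by omega) : 0 < (N - a) * k)
    rw [← succ_mul_mul_binomialTerm_succ k (by omega)]
    exact Nat.mul_le_mul_right _ <|
      (Nat.mul_le_mul (by omega : a + 1 ≤ k) (by omega : N - k ≤ N - a)).trans_eq (mul_comm _ _)
  have down : AntitoneOn (binomialTerm N k) (Set.Icc k N) := by
    refine antitoneOn_of_succ_le Set.ordConnected_Icc fun a _ ha ha' ↦ ?_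
    simp only [Order.succ_eq_add_one, Set.mem_Icc] at ha ha' ⊢
    refine le_of_mul_le_mul_left ?_ (Nat.mul_pos (by omega) (by omega) : 0 < (a + 1) * (N - k))
    rw [succ_mul_mul_binomialTerm_succ k (by omega)]
    exact Nat.mul_le_mul_right _ <|
      (Nat.mul_le_mul (by omega : N - a ≤ N - k) (by omega : k ≤ a + 1)).trans_eq (mul_comm _ _)
  rcases le_total j k with hjk | hjk
  · exact up hjk (Set.mem_Iic.2 le_rfl) hjk
  · exact down (Set.left_mem_Icc.2 hk) ⟨hjk, hj⟩ hjk

lemma choose_mul_pow_mul_pow_le {N k : ℕ} (hk : k ≤ N) :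
    N.choose k * k ^ k * (N - k) ^ (N - k) ≤ N ^ N :=
  sum_binomialTerm hk ▸
    single_le_sum (f := binomialTerm N k) (fun _ _ ↦ Nat.zero_le _) (mem_range.2 (by omega))

lemma pow_le_succ_mul_choose_mul_pow_mul_pow {N k : ℕ} (hk : k ≤ N) :
    N ^ N ≤ (N + 1) * (N.choose k * k ^ k * (N - k) ^ (N - k)) := by
  rw [← sum_binomialTerm hk]
  calc _ ≤ ∑ _j ∈ range (N + 1), binomialTerm N k k :=
        sum_le_sum fun j hj ↦ binomialTerm_le_self hk (Nat.lt_succ_iff.1 (mem_range.1 hj))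
    _ = _ := by rw [sum_const, card_range, smul_eq_mul, binomialTerm]

lemma exp_natCast_mul_log_div {N : ℕ} (hN : 0 < N) (a : ℕ) :
    exp (a * log (a / N)) = ((a : ℝ) / N) ^ a := by
  rcases a.eq_zero_or_pos with rfl | ha
  · simp
  · rw [exp_nat_mul, exp_log (by positivity)]

lemma exp_mul_gEntropy_gridPoint {N k : ℕ} (hN : 0 < N) (hk : k ≤ N) :
    exp (N * gEntropy (gridPoint N k)) =
      ((k ^ k * (N - k) ^ (N - k) : ℕ) : ℝ) / (N ^ N : ℕ) := by
  have hN' : (N : ℝ) ≠ 0 := by positivity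
  have h₁ : (1 + gridPoint N k) / 2 = k / N := by rw [gridPoint]; field_simp; ring
  have h₂ : (1 - gridPoint N k) / 2 = (N - k : ℕ) / N := by
    rw [gridPoint, Nat.cast_sub hk]; field_simp; ring
  have : N * gEntropy (gridPoint N k) =
      (N - k : ℕ) * log ((N - k : ℕ) / N) + k * log (k / N) := by
    rw [gEntropy, h₁, h₂]; field_simp
  rw [this, exp_add, exp_natCast_mul_log_div hN, exp_natCast_mul_log_div hN, div_pow, div_pow,
    div_mul_div_comm, ← pow_add, Nat.sub_add_cancel hk]
  push_cast
  ring

lemma choose_le_exp_neg_mul_gEntropy {N k : ℕ} (hN : 0 < N) (hk : k ≤ N) :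
    (N.choose k : ℝ) ≤ exp (-(N * gEntropy (gridPoint N k))) := by
  rw [exp_neg, exp_mul_gEntropy_gridPoint hN hk, inv_div,
    le_div_iff₀ (Nat.cast_pos.2 (Nat.mul_pos Nat.pow_self_pos Nat.pow_self_pos))]
  exact_mod_cast (mul_assoc (N.choose k) _ _).symm.trans_le (choose_mul_pow_mul_pow_le hk)

lemma exp_neg_mul_gEntropy_le {N k : ℕ} (hN : 0 < N) (hk : k ≤ N) :
    exp (-(N * gEntropy (gridPoint N k))) ≤ (N + 1) * N.choose k := by
  rw [exp_neg, exp_mul_gEntropy_gridPoint hN hk, inv_div,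
    div_le_iff₀ (Nat.cast_pos.2 (Nat.mul_pos Nat.pow_self_pos Nat.pow_self_pos))]
  have := pow_le_succ_mul_choose_mul_pow_mul_pow hk
  rw [mul_assoc (N.choose k)] at this
  exact_mod_cast this.trans_eq (mul_assoc _ _ _).symm

lemma continuous_gEntropy : Continuous gEntropy :=
  (continuous_mul_log.comp (by fun_prop)).add (continuous_mul_log.comp (by fun_prop))

lemma tendsto_gridPoint_floor {m : ℝ} (hm : -1 ≤ m) :
    Tendsto (fun N : ℕ ↦ gridPoint N ⌊(1 + m) / 2 * N⌋₊) atTop (𝓝 m) := by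
  have hx : 0 ≤ (1 + m) / 2 := by linarith
  have := (((tendsto_nat_floor_mul_div_atTop hx).comp tendsto_natCast_atTop_atTop).const_mul 2
    |>.sub_const 1)
  rw [show 2 * ((1 + m) / 2) - 1 = m by ring] at this
  refine this.congr' ?_
  filter_upwards [eventually_gt_atTop 0] with N hN
  have hN' : (N : ℝ) ≠ 0 := by positivity
  simp only [Function.comp_apply, gridPoint]
  field_simp

lemma floor_mul_natCast_le {x : ℝ} (hx : x ≤ 1) (N : ℕ) : ⌊x * N⌋₊ ≤ N :=
  Nat.floor_le_of_le (mul_le_of_le_one_left N.cast_nonneg hx)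

lemma tendsto_add_log_succ_div (C : ℝ) :
    Tendsto (fun N : ℕ ↦ (C + log (N + 1)) / N) atTop (𝓝 0) := by
  have hlog : Tendsto (fun N : ℕ ↦ log (N + 1) / N) atTop (𝓝 0) := by
    have := (tendsto_pow_log_div_mul_add_atTop 1 (-1) 1 one_ne_zero).comp
      (tendsto_atTop_add_const_right atTop 1 tendsto_natCast_atTop_atTop)
    simpa [Function.comp_def] using this
  simpa [add_div] using (tendsto_const_div_atTop_nhds_zero_nat C).add hlog

lemma log_sum_exp_le_log_sum_exp_add {ι : Type*} [Fintype ι] [Nonempty ι] {f g : ι → ℝ}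
    {C : ℝ} (hfg : ∀ i, f i ≤ g i + C) :
    log (∑ i, exp (f i)) ≤ log (∑ i, exp (g i)) + C := by
  calc log (∑ i, exp (f i)) ≤ log (∑ i, exp (g i) * exp C) :=
        log_le_log (by positivity) <|
          sum_le_sum fun i _ ↦ by rw [← exp_add]; exact exp_le_exp.2 (hfg i)
    _ = _ := by rw [← sum_mul, log_mul (by positivity) (exp_pos C).ne', log_exp]

section FreeEnergy

variable (p : ℕ) (β J h : ℝ)

noncomputable def energy (m : ℝ) : ℝ := β * J * m ^ p / p + β * h * m

/-- Minus the Landau functional `L₂` of the paper. -/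
noncomputable def freeEnergyFunctional (m : ℝ) : ℝ := energy p β J h m - gEntropy m

/-- `-β H_p(σ)`. -/
noncomputable def logWeight {N : ℕ} (σ : Fin N → Bool) : ℝ :=
  β * J * (p - 1)! / N ^ (p - 1) * esymm (fun i ↦ spin (σ i)) p + β * h * ∑ i, spin (σ i)

lemma continuous_freeEnergyFunctional : Continuous (freeEnergyFunctional p β J h) :=
  Continuous.sub (by unfold energy; fun_prop) continuous_gEntropy

noncomputable def partitionFunction (N : ℕ) : ℝ :=
  ∑ σ : Fin N → Bool, exp (logWeight p β J h σ)

/-- `partitionFunction` with `logWeight σ` replaced by `N` times the energy at the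
magnetization of `σ`. -/
noncomputable def reducedPartitionFunction (N : ℕ) : ℝ :=
  ∑ k ∈ range (N + 1), N.choose k * exp (N * energy p β J h (gridPoint N k))

lemma abs_logWeight_sub_le (hp : 1 ≤ p) {N : ℕ} (hN : 0 < N) (σ : Fin N → Bool) :
    |logWeight p β J h σ - N * energy p β J h (gridPoint N #{i | σ i})| ≤
      |β * J| * (p - 1)! := by
  have hN' : (N : ℝ) ≠ 0 := by positivity
  have hS : ∑ i, spin (σ i) = N * gridPoint N #{i | σ i} := by
    rw [sum_spin, gridPoint, Fintype.card_fin]; field_simp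
  have hfact : (p ! : ℝ) = p * (p - 1)! := by
    exact_mod_cast (Nat.mul_factorial_pred (by omega)).symm
  have hpow : (N : ℝ) ^ p = N * N ^ (p - 1) := by rw [← pow_succ', Nat.sub_add_cancel hp]
  have key : logWeight p β J h σ - N * energy p β J h (gridPoint N #{i | σ i}) =
      β * J / (p * N ^ (p - 1)) *
        (p ! * esymm (fun i ↦ spin (σ i)) p - (∑ i, spin (σ i)) ^ p) := by
    rw [logWeight, energy, hS, mul_pow, hfact, hpow]; field_simp; ring
  have hbound := abs_factorial_mul_esymm_sub_pow_le (fun i ↦ spin (σ i)) (fun i ↦ abs_spin _) p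
  rw [Fintype.card_fin] at hbound
  rw [key, abs_mul, abs_div, abs_of_pos (by positivity : (0 : ℝ) < p * N ^ (p - 1))]
  calc _ ≤ |β * J| / (p * N ^ (p - 1)) * (p ! * N ^ (p - 1)) := by gcongr
    _ = _ := by rw [hfact]; field_simp

lemma reducedPartitionFunction_pos (N : ℕ) : 0 < reducedPartitionFunction p β J h N :=
  sum_pos' (fun _ _ ↦ by positivity) ⟨0, by simp, by simp [exp_pos]⟩

lemma abs_log_partitionFunction_sub_le (hp : 1 ≤ p) {N : ℕ} (hN : 0 < N) :
    |log (partitionFunction p β J h N) - log (reducedPartitionFunction p β J h N)| ≤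
      |β * J| * (p - 1)! := by
  have hreduced : reducedPartitionFunction p β J h N =
      ∑ σ : Fin N → Bool, exp (N * energy p β J h (gridPoint N #{i | σ i})) := by
    rw [sum_comp_card_filter fun k ↦ exp (N * energy p β J h (gridPoint N k)), Fintype.card_fin,
      reducedPartitionFunction]
    simp only [nsmul_eq_mul]
  have hclose σ := abs_le.1 (abs_logWeight_sub_le p β J h hp hN σ)
  rw [hreduced, abs_sub_le_iff]
  exact ⟨sub_le_iff_le_add'.2 (log_sum_exp_le_log_sum_exp_add fun σ ↦ by linarith [hclose σ]),
    sub_le_iff_le_add'.2 (log_sum_exp_le_log_sum_exp_add fun σ ↦ by linarith [hclose σ])⟩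

lemma exp_mul_freeEnergyFunctional_eq (N k : ℕ) :
    exp (N * freeEnergyFunctional p β J h (gridPoint N k)) =
      exp (-(N * gEntropy (gridPoint N k))) * exp (N * energy p β J h (gridPoint N k)) := by
  rw [← exp_add, freeEnergyFunctional]; ring_nf

lemma reducedPartitionFunction_le {N : ℕ} (hN : 0 < N) {T : ℝ}
    (hT : ∀ k ≤ N, freeEnergyFunctional p β J h (gridPoint N k) ≤ T) :
    reducedPartitionFunction p β J h N ≤ (N + 1) * exp (N * T) := by
  calc _ ≤ ∑ _k ∈ range (N + 1), exp (N * T) := sum_le_sum fun k hk ↦ ?_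
    _ = _ := by rw [sum_const, card_range, nsmul_eq_mul]; push_cast; ring
  have hk' : k ≤ N := Nat.lt_succ_iff.1 (mem_range.1 hk)
  calc (N.choose k : ℝ) * exp (N * energy p β J h (gridPoint N k))
      ≤ exp (-(N * gEntropy (gridPoint N k))) * exp (N * energy p β J h (gridPoint N k)) := by
        gcongr; exact choose_le_exp_neg_mul_gEntropy hN hk'
    _ = exp (N * freeEnergyFunctional p β J h (gridPoint N k)) :=
        (exp_mul_freeEnergyFunctional_eq p β J h N k).symm
    _ ≤ exp (N * T) := by gcongr; exact hT k hk'

lemma exp_mul_freeEnergyFunctional_le {N k : ℕ} (hN : 0 < N) (hk : k ≤ N) :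
    exp (N * freeEnergyFunctional p β J h (gridPoint N k)) ≤
      (N + 1) * reducedPartitionFunction p β J h N := by
  rw [exp_mul_freeEnergyFunctional_eq p β J h]
  calc _ ≤ (N + 1) * (N.choose k * exp (N * energy p β J h (gridPoint N k))) := by
        rw [← mul_assoc]; gcongr; exact exp_neg_mul_gEntropy_le hN hk
    _ ≤ _ := by
        gcongr
        exact single_le_sum
          (f := fun k ↦ (N.choose k : ℝ) * exp (N * energy p β J h (gridPoint N k)))
          (fun _ _ ↦ by positivity) (mem_range.2 (by omega))

lemma one_div_mul_log_partitionFunction_le (hp : 1 ≤ p) {N : ℕ} (hN : 0 < N) {T : ℝ}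
    (hT : ∀ k ≤ N, freeEnergyFunctional p β J h (gridPoint N k) ≤ T) :
    1 / (N : ℝ) * log (partitionFunction p β J h N) ≤
      T + (|β * J| * (p - 1)! + log (N + 1)) / N := by
  have hclose := (abs_sub_le_iff.1 (abs_log_partitionFunction_sub_le p β J h hp hN)).1
  have hreduced : log (reducedPartitionFunction p β J h N) ≤ log (N + 1) + N * T := by
    calc _ ≤ log ((N + 1) * exp (N * T)) :=
          log_le_log (reducedPartitionFunction_pos p β J h N)
            (reducedPartitionFunction_le p β J h hN hT)
      _ = _ := by rw [log_mul (by positivity) (exp_pos _).ne', log_exp]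
  have hN' : (0 : ℝ) < N := by exact_mod_cast hN
  rw [one_div_mul_eq_div, div_le_iff₀ hN', add_mul, div_mul_cancel₀ _ hN'.ne']
  linarith

lemma sub_le_one_div_mul_log_partitionFunction (hp : 1 ≤ p) {N k : ℕ} (hN : 0 < N)
    (hk : k ≤ N) :
    freeEnergyFunctional p β J h (gridPoint N k) - (|β * J| * (p - 1)! + log (N + 1)) / N ≤
      1 / (N : ℝ) * log (partitionFunction p β J h N) := by
  have hclose := (abs_sub_le_iff.1 (abs_log_partitionFunction_sub_le p β J h hp hN)).2
  have hreduced : N * freeEnergyFunctional p β J h (gridPoint N k) ≤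
      log (N + 1) + log (reducedPartitionFunction p β J h N) := by
    calc _ = log (exp (N * freeEnergyFunctional p β J h (gridPoint N k))) := (log_exp _).symm
      _ ≤ log ((N + 1) * reducedPartitionFunction p β J h N) :=
          log_le_log (exp_pos _) (exp_mul_freeEnergyFunctional_le p β J h hN hk)
      _ = _ := log_mul (by positivity) (reducedPartitionFunction_pos p β J h N).ne'
  have hN' : (0 : ℝ) < N := by exact_mod_cast hN
  rw [one_div_mul_eq_div, le_div_iff₀ hN', sub_mul, div_mul_cancel₀ _ hN'.ne']
  linarith

end FreeEnergy

end PSpin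

open PSpin

theorem pspin_free_energy
    (p : ℕ) (hp : 2 ≤ p) (β J h : ℝ) :
    Tendsto
      (fun N : ℕ => (1 / (N : ℝ)) * Real.log
        (∑ σ : Fin N → Bool, Real.exp
          ((β * J * (Nat.factorial (p - 1) : ℝ) / (N : ℝ) ^ (p - 1)) *
              ∑ A ∈ Finset.univ.powersetCard p, ∏ i ∈ A, spin (σ i)
            + β * h * ∑ i, spin (σ i))))
      atTop
      (nhds (⨆ m : Set.Icc (-1 : ℝ) 1,
        (β * J * (m : ℝ) ^ p / p + β * h * (m : ℝ) - gEntropy m))) := by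
  have hφ := continuous_freeEnergyFunctional p β J h
  obtain ⟨m₀, hm₀, hmax⟩ := isCompact_Icc.exists_isMaxOn
    (Set.nonempty_Icc.2 (by norm_num : (-1 : ℝ) ≤ 1)) hφ.continuousOn
  change Tendsto (fun N : ℕ ↦ 1 / (N : ℝ) * log (partitionFunction p β J h N)) atTop
    (𝓝 (⨆ m : Set.Icc (-1 : ℝ) 1, freeEnergyFunctional p β J h m))
  rw [hmax.iSup_eq hm₀]
  have herr := tendsto_add_log_succ_div (|β * J| * (p - 1)!)
  refine tendsto_of_tendsto_of_tendsto_of_le_of_le'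
    (by simpa only [sub_zero] using
      ((hφ.tendsto m₀).comp (tendsto_gridPoint_floor hm₀.1)).sub herr)
    (by simpa only [add_zero] using tendsto_const_nhds.add herr) ?_ ?_
  · filter_upwards [eventually_gt_atTop 0] with N hN
    exact sub_le_one_div_mul_log_partitionFunction p β J h (by omega) hN
      (floor_mul_natCast_le (by linarith [hm₀.2]) N)
  · filter_upwards [eventually_gt_atTop 0] with N hN
    exact one_div_mul_log_partitionFunction_le p β J h (by omega) hN
      fun k hk ↦ hmax (gridPoint_mem_Icc hk)
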